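/- arXiv:2011.15009 — 2 statements merged into one kernel-verified Lean document; each statement's English description precedes it below -/
import Mathlib

section
/- The homeomorphism group of any Hausdorff zero-dimensional space X is fully transitive: for every k and every pair of k-tuples (x_1,…,x_k), (y_1,…,y_k) of distinct points with x_i similar to y_i for each i, there is a homeomorphism g of X with g(x_i) = y_i for all i. -/
/-!
A point-similarity `x ~ y` is witnessed by an open partial homeomorphism `e` of `X` with
`e x = y`. In a zero-dimensional Hausdorff space, `e` restricts to a clopen neighbourhood `A`
of `x`, as small as we like, whose image `e '' A` is again clopen and disjoint from `A`;
letting `e` act on `A`, `e.symm` on `e '' A` and the identity elsewhere gives a homeomorphism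
of `X` moving `x` to `y` and fixing any prescribed finite set away from `x` and `y`.
Moving the points one at a time then proves the theorem by induction on `k`.
-/

/-- Two points are similar if some homeomorphism between open neighbourhoods
sends one to the other. -/
def PointsSimilar {X : Type*} [TopologicalSpace X] (x y : X) : Prop :=
  ∃ (U V : Set X) (_ : IsOpen U) (_ : IsOpen V) (hx : x ∈ U) (_ : y ∈ V)
    (h : U ≃ₜ V), (h ⟨x, hx⟩ : X) = y

section

open Set Filter Topology TopologicalSpace

variable {X : Type*} [TopologicalSpace X]

theorem PointsSimilar.exists_openPartialHomeomorph {x y : X} (hxy : PointsSimilar x y) :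
    ∃ e : OpenPartialHomeomorph X X, x ∈ e.source ∧ e x = y := by
  obtain ⟨U, V, hU, hV, hxU, -, h, rfl⟩ := hxy
  have : Nonempty U := ⟨⟨x, hxU⟩⟩
  have : Nonempty V := ⟨h ⟨x, hxU⟩⟩
  let eU := hU.isOpenEmbedding_subtypeVal.toOpenPartialHomeomorph
  let eV := hV.isOpenEmbedding_subtypeVal.toOpenPartialHomeomorph
  have hx : eU.symm x = ⟨x, hxU⟩ :=
    hU.isOpenEmbedding_subtypeVal.toOpenPartialHomeomorph_left_inv (x := ⟨x, hxU⟩)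
  refine ⟨eU.symm.trans (h.transOpenPartialHomeomorph eV), ?_, ?_⟩
  · exact ⟨by simp [eU, hxU], by simp [eV]⟩
  · simp [eV, hx]

theorem IsClopen.continuous_piecewise {Y : Type*} [TopologicalSpace Y] {s : Set X}
    [∀ x, Decidable (x ∈ s)] {f g : X → Y} (hs : IsClopen s) (hf : ContinuousOn f s)
    (hg : ContinuousOn g sᶜ) : Continuous (s.piecewise f g) :=
  _root_.continuous_piecewise (by simp [hs.frontier_eq]) (by rwa [hs.isClosed.closure_eq])
    (by rwa [hs.isOpen.isClosed_compl.closure_eq])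

namespace OpenPartialHomeomorph

variable (e : OpenPartialHomeomorph X X) {A : Set X}

theorem exists_homeomorph_eqOn_of_isClopen (hA : IsClopen A) (hAe : A ⊆ e.source)
    (heA : IsClopen (e '' A)) (hdisj : Disjoint A (e '' A)) :
    ∃ g : X ≃ₜ X, EqOn g e A ∧ ∀ z ∉ A ∪ e '' A, g z = z := by
  classical
  set f := A.piecewise e ((e '' A).piecewise e.symm id)
  have hf_inv : Function.Involutive f := by
    intro z
    by_cases hzA : z ∈ A
    · have hez : e z ∈ e '' A := mem_image_of_mem e hzA
      simp only [f, piecewise_eq_of_mem _ _ _ hzA, piecewise_eq_of_notMem _ _ _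
        (disjoint_right.1 hdisj hez), piecewise_eq_of_mem _ _ _ hez, e.left_inv (hAe hzA)]
    by_cases hzeA : z ∈ e '' A
    · obtain ⟨a, ha, rfl⟩ := hzeA
      simp only [f, piecewise_eq_of_notMem _ _ _ hzA,
        piecewise_eq_of_mem _ _ _ (mem_image_of_mem e ha), e.left_inv (hAe ha),
        piecewise_eq_of_mem _ _ _ ha]
    · simp [f, hzA, hzeA]
  have hf_cont : Continuous f :=
    hA.continuous_piecewise (e.continuousOn.mono hAe)
      (heA.continuous_piecewise
        (e.symm.continuousOn.mono ((e.mapsTo.mono_left hAe).image_subset))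
        continuousOn_id).continuousOn
  refine ⟨⟨hf_inv.toPerm f, hf_cont, hf_cont⟩, fun z hz => ?_, fun z hz => ?_⟩
  · change f z = e z
    simp [f, hz]
  · simp only [mem_union, not_or] at hz
    change f z = z
    simp [f, hz.1, hz.2]

theorem isClosed_image_of_image_subset {C : Set X} (hA : IsClosed A) (hAe : A ⊆ e.source)
    (hC : IsClosed C) (hCe : C ⊆ e.target) (heA : e '' A ⊆ C) : IsClosed (e '' A) := by
  have : e '' A = C ∩ e.symm ⁻¹' A := by
    rw [e.image_eq_target_inter_inv_preimage hAe] at heA ⊢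
    exact Subset.antisymm (fun z hz => ⟨heA hz, hz.2⟩) fun z hz => ⟨hCe hz.1, hz.2⟩
  rw [this]
  exact (e.symm.continuousOn.mono hCe).preimage_isClosed_of_isClosed hC hA

theorem exists_isClopen_isClopen_image (hB : IsTopologicalBasis {s : Set X | IsClopen s})
    {x : X} (hx : x ∈ e.source) {U V : Set X} (hU : U ∈ 𝓝 x) (hV : V ∈ 𝓝 (e x)) :
    ∃ A, IsClopen A ∧ x ∈ A ∧ A ⊆ e.source ∩ U ∧ IsClopen (e '' A) ∧ e '' A ⊆ V := by
  obtain ⟨C, hC, hxC, hCsub⟩ :=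
    hB.mem_nhds_iff.1 (inter_mem (e.open_target.mem_nhds (e.map_source hx)) hV)
  obtain ⟨A, hA, hxA, hAsub⟩ :=
    hB.mem_nhds_iff.1
      (inter_mem ((e.isOpen_inter_preimage hC.isOpen).mem_nhds ⟨hx, hxC⟩) hU)
  have hAe : A ⊆ e.source := fun z hz => (hAsub hz).1.1
  have heAC : e '' A ⊆ C := image_subset_iff.2 fun z hz => (hAsub hz).1.2
  refine ⟨A, hA, hxA, fun z hz => ⟨hAe hz, (hAsub hz).2⟩, ⟨?_, ?_⟩,
    heAC.trans fun z hz => (hCsub hz).2⟩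
  · exact e.isClosed_image_of_image_subset hA.isClosed hAe hC.isClosed
      (fun z hz => (hCsub hz).1) heAC
  · exact e.isOpen_image_of_subset_source hA.isOpen hAe

theorem exists_homeomorph_apply_eq [T2Space X]
    (hB : IsTopologicalBasis {s : Set X | IsClopen s}) {x : X} (hx : x ∈ e.source)
    {W : Set X} (hW : IsOpen W) (hxW : x ∈ W) (hexW : e x ∈ W) :
    ∃ g : X ≃ₜ X, g x = e x ∧ ∀ z ∉ W, g z = z := by
  rcases eq_or_ne x (e x) with hfix | hne
  · exact ⟨Homeomorph.refl X, hfix, fun _ _ => rfl⟩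
  obtain ⟨U, V, hU, hV, hxU, hexV, hUV⟩ := t2_separation hne
  obtain ⟨A, hA, hxA, hAsub, heA, heAsub⟩ := e.exists_isClopen_isClopen_image hB hx
    (inter_mem (hU.mem_nhds hxU) (hW.mem_nhds hxW))
    (inter_mem (hV.mem_nhds hexV) (hW.mem_nhds hexW))
  obtain ⟨g, hgA, hgfix⟩ := e.exists_homeomorph_eqOn_of_isClopen hA
    (fun z hz => (hAsub hz).1) heA
    (hUV.mono (fun z hz => (hAsub hz).2.1) fun z hz => (heAsub hz).1)
  refine ⟨g, hgA hxA, fun z hz => hgfix z ?_⟩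
  rintro (hzA | hzA)
  exacts [hz (hAsub hzA).2.2, hz (heAsub hzA).2]

end OpenPartialHomeomorph

end

/-- The homeomorphism group of a Hausdorff zero-dimensional space is fully
transitive. -/
theorem fully_transitive_of_zeroDim (X : Type*) [TopologicalSpace X] [T2Space X]
    (hzd : ∀ (x : X) (U : Set X), IsOpen U → x ∈ U →
      ∃ V : Set X, IsClopen V ∧ x ∈ V ∧ V ⊆ U) :
    ∀ (k : ℕ) (x y : Fin k → X), Function.Injective x → Function.Injective y →
      (∀ i, PointsSimilar (x i) (y i)) →
      ∃ g : X ≃ₜ X, ∀ i, g (x i) = y i := by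
  have hB : TopologicalSpace.IsTopologicalBasis {s : Set X | IsClopen s} :=
    TopologicalSpace.isTopologicalBasis_of_isOpen_of_nhds (fun _ hs => hs.isOpen)
      fun a u hau hu => hzd a u hu hau
  intro k
  induction k with
  | zero => exact fun _ _ _ _ _ => ⟨Homeomorph.refl X, fun i => i.elim0⟩
  | succ k ih =>
    intro x y hx hy hsim
    obtain ⟨g₁, hg₁⟩ := ih (Fin.tail x) (Fin.tail y) (hx.comp (Fin.succ_injective k))
      (hy.comp (Fin.succ_injective k)) fun i => hsim i.succ
    obtain ⟨e, he, hey⟩ := (hsim 0).exists_openPartialHomeomorph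
    have hx₀ : g₁ (x 0) ∉ Set.range (Fin.tail y) := by
      rintro ⟨i, hi⟩
      rw [← hg₁ i] at hi
      exact Fin.succ_ne_zero i (hx (g₁.injective hi))
    have hy₀ : y 0 ∉ Set.range (Fin.tail y) := fun ⟨i, hi⟩ => Fin.succ_ne_zero i (hy hi)
    obtain ⟨g₂, hg₂, hg₂fix⟩ :=
      (g₁.symm.transOpenPartialHomeomorph e).exists_homeomorph_apply_eq hB (x := g₁ (x 0))
        (by simpa using he) (Set.finite_range _).isClosed.isOpen_compl hx₀
        (by simpa [hey] using hy₀)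
    refine ⟨g₁.trans g₂, Fin.cases ?_ fun i => ?_⟩
    · simpa [hey] using hg₂
    · exact (congrArg g₂ (hg₁ i)).trans (hg₂fix _ (not_not_intro ⟨i, rfl⟩))
end

section
/- If α and β are infinite ordinals, then the ordinal spaces α + β + 1 and β + α + 1 (with their order topologies) are homeomorphic. -/
/-!
Splitting `α + β + 1` at the point `α`, which is isolated from above since it has the successor
`α + 1`, exhibits it as the topological disjoint sum of `α + 1` and of the remaining interval,
which is order-isomorphic to `β + 1` because `1 + β = β` for infinite `β`. The disjoint sum is
commutative, so `α + β + 1` and `β + α + 1` are homeomorphic.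
-/

open Set Ordinal

open scoped Classical in
noncomputable def IsClopen.sumComplHomeomorph {X : Type*} [TopologicalSpace X] {s : Set X}
    (hs : IsClopen s) : s ⊕ (sᶜ : Set X) ≃ₜ X :=
  (Equiv.Set.sumCompl s).toHomeomorphOfContinuousOpen
    (continuous_sum_dom.2 ⟨continuous_subtype_val, continuous_subtype_val⟩)
    (isOpenMap_sum.2 ⟨hs.isOpen.isOpenMap_subtype_val, hs.compl.isOpen.isOpenMap_subtype_val⟩)

noncomputable def Homeomorph.iicSumIoiOfIsOpen {X : Type*} [TopologicalSpace X] [LinearOrder X]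
    [ClosedIicTopology X] {a : X} (ha : IsOpen (Iic a)) : Iic a ⊕ Ioi a ≃ₜ X :=
  (Homeomorph.sumCongr (.refl _) (.setCongr compl_Iic.symm)).trans
    (IsClopen.sumComplHomeomorph ⟨isClosed_Iic, ha⟩)

namespace Ordinal

variable {a : Ordinal}

theorem lt_add_one_add_of_le (b : Ordinal) {x : Ordinal} (hx : x ≤ a) : x < a + 1 + b :=
  (Order.lt_add_one_iff.2 hx).trans_le le_self_add

def iicOrderIsoIioAddOne (b : Ordinal) :
    Iic (⟨a, lt_add_one_add_of_le b le_rfl⟩ : Iio (a + 1 + b)) ≃o Iio (a + 1) where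
  toFun x := ⟨x.1.1, mem_Iio.2 (Order.lt_add_one_iff.2 x.2)⟩
  invFun y := ⟨⟨y.1, lt_add_one_add_of_le b (Order.lt_add_one_iff.1 y.2)⟩,
    (Order.lt_add_one_iff.1 y.2 : y.1 ≤ a)⟩
  map_rel_iff' := Iff.rfl

noncomputable def iioOrderIsoIoiAddOneAdd (b : Ordinal) :
    Iio b ≃o Ioi (⟨a, lt_add_one_add_of_le b le_rfl⟩ : Iio (a + 1 + b)) where
  toFun y :=
    ⟨⟨a + 1 + y, mem_Iio.2 (add_lt_add_right y.2 _)⟩, (lt_add_one a).trans_le le_self_add⟩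
  invFun x := ⟨x.1.1 - (a + 1), (sub_lt_of_le (Order.add_one_le_of_lt x.2)).2 x.1.2⟩
  left_inv _ := Subtype.ext (Ordinal.add_sub_cancel _ _)
  right_inv x :=
    Subtype.ext <| Subtype.ext <| Ordinal.add_sub_cancel_of_le (Order.add_one_le_of_lt x.2)
  map_rel_iff' {x y} := show a + 1 + x.1 ≤ a + 1 + y.1 ↔ x ≤ y from add_le_add_iff_left _

theorem isOpen_Iic_in_Iio_add_one_add (b : Ordinal) :
    IsOpen (Iic (⟨a, lt_add_one_add_of_le b le_rfl⟩ : Iio (a + 1 + b))) := by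
  have h : Iic (⟨a, lt_add_one_add_of_le b le_rfl⟩ : Iio (a + 1 + b)) =
      Subtype.val ⁻¹' Iio (a + 1) := by
    ext x
    exact (Order.lt_add_one_iff (α := Ordinal)).symm
  rw [h]
  exact isOpen_Iio.preimage continuous_subtype_val

noncomputable def iioAddOneAddHomeomorph (a b : Ordinal) :
    Iio (a + 1 + b) ≃ₜ Iio (a + 1) ⊕ Iio b :=
  (Homeomorph.iicSumIoiOfIsOpen (isOpen_Iic_in_Iio_add_one_add b)).symm.trans
    (Homeomorph.sumCongr (iicOrderIsoIioAddOne b).toHomeomorph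
      (iioOrderIsoIoiAddOneAdd b).symm.toHomeomorph)

theorem add_add_one_eq_add_one_add_add_one (a : Ordinal) {b : Ordinal} (hb : ω ≤ b) :
    a + b + 1 = a + 1 + (b + 1) := by
  rw [add_assoc a 1, ← add_assoc 1, one_add_of_omega0_le hb, add_assoc]

noncomputable def iioAddAddOneHomeomorph (a : Ordinal) {b : Ordinal} (hb : ω ≤ b) :
    Iio (a + b + 1) ≃ₜ Iio (a + 1) ⊕ Iio (b + 1) :=
  (Homeomorph.setCongr (congrArg Iio (add_add_one_eq_add_one_add_add_one a hb))).trans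
    (iioAddOneAddHomeomorph a (b + 1))

end Ordinal

/-- For infinite ordinals `α`, `β`, the ordinal spaces `α + β + 1` and
`β + α + 1` are homeomorphic. -/
theorem ordinal_add_comm_homeo (α β : Ordinal)
    (hα : Ordinal.omega0 ≤ α) (hβ : Ordinal.omega0 ≤ β) :
    Nonempty ((Set.Iio (α + β + 1)) ≃ₜ (Set.Iio (β + α + 1))) :=
  ⟨(iioAddAddOneHomeomorph α hβ).trans
    ((Homeomorph.sumComm _ _).trans (iioAddAddOneHomeomorph β hα).symm)⟩
end
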